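/- Suppose (A, p_A) satisfies the strong hash condition with parameters (α_A, β_A) and (A', p_{A'}) satisfies it with parameters (α_{A'}, β_{A'}), where both families consist of functions on U^n. Define the product family Â := A × A' with functions Â u := (A u, A' u), product distribution p_Â(A, A') := p_A(A)·p_{A'}(A'), and image Im(Â) ⊆ Im(A) × Im(A'). Then (Â, p_Â) satisfies the strong hash condition with parameters α_Â = α_A·α_{A'} and β_Â = β_A + β_{A'}. -/
import Mathlib


open Finset
open scoped Classical

variable {U B B' : Type*}

/-- collision probability `p_A({A : A u = A u'})`. -/
noncomputable def collP [Fintype U] [DecidableEq U] [Fintype B] {n : ℕ}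
    (p : ((Fin n → U) → B) → ℝ) (u u' : Fin n → U) : ℝ :=
  ∑ A : (Fin n → U) → B, p A * (if A u = A u' then 1 else 0)

/-- collision probability for the product family `Â u = (A u, A' u)` with the
product distribution `p_Â(A,A') = p(A)·p'(A')`. -/
noncomputable def pairCollP [Fintype U] [DecidableEq U] [Fintype B] [Fintype B'] {n : ℕ}
    (p : ((Fin n → U) → B) → ℝ) (p' : ((Fin n → U) → B') → ℝ) (u u' : Fin n → U) : ℝ :=
  ∑ A : (Fin n → U) → B, ∑ A' : (Fin n → U) → B',
    p A * p' A' * (if A u = A u' ∧ A' u = A' u' then 1 else 0)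


lemma collP_nonneg [Fintype U] [DecidableEq U] [Fintype B] {n : ℕ}
    (p : ((Fin n → U) → B) → ℝ) (hp : ∀ A, 0 ≤ p A) (u u' : Fin n → U) :
    0 ≤ collP p u u' := by
  apply Finset.sum_nonneg
  intro A _
  have : (0:ℝ) ≤ (if A u = A u' then (1:ℝ) else 0) := by positivity
  exact mul_nonneg (hp A) this

lemma collP_le_one [Fintype U] [DecidableEq U] [Fintype B] {n : ℕ}
    (p : ((Fin n → U) → B) → ℝ) (hp : ∀ A, 0 ≤ p A) (hp1 : ∑ A, p A = 1)
    (u u' : Fin n → U) : collP p u u' ≤ 1 := by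
  rw [← hp1]
  apply Finset.sum_le_sum
  intro A _
  by_cases h : A u = A u' <;> simp [h, hp A]

lemma pairCollP_eq [Fintype U] [DecidableEq U] [Fintype B] [Fintype B'] {n : ℕ}
    (p : ((Fin n → U) → B) → ℝ) (p' : ((Fin n → U) → B') → ℝ) (u u' : Fin n → U) :
    pairCollP p p' u u' = collP p u u' * collP p' u u' := by
  unfold pairCollP collP
  rw [Finset.sum_mul_sum]
  apply Finset.sum_congr rfl
  intro A _
  apply Finset.sum_congr rfl
  intro A' _
  by_cases h : A u = A u' <;> by_cases h' : A' u = A' u' <;> simp [h, h']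

/-- the product of two families with the strong hash property has the strong
hash property with parameters `α·α'` and `β + β'`. -/
theorem stmt4 [Fintype U] [DecidableEq U] [Fintype B] [Fintype B'] {n : ℕ}
    (p : ((Fin n → U) → B) → ℝ) (hp : ∀ A, 0 ≤ p A) (hp1 : ∑ A, p A = 1)
    (p' : ((Fin n → U) → B') → ℝ) (hp' : ∀ A', 0 ≤ p' A') (hp1' : ∑ A', p' A' = 1)
    (α β α' β' : ℝ) (hα : 0 ≤ α) (hβ : 0 ≤ β) (hα' : 0 ≤ α') (hβ' : 0 ≤ β')
    (H3 : ∀ u : Fin n → U,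
      ∑ u' ∈ Finset.univ.filter
          (fun u' => u' ≠ u ∧ α / (Fintype.card B : ℝ) < collP p u u'),
        collP p u u' ≤ β)
    (H3' : ∀ u : Fin n → U,
      ∑ u' ∈ Finset.univ.filter
          (fun u' => u' ≠ u ∧ α' / (Fintype.card B' : ℝ) < collP p' u u'),
        collP p' u u' ≤ β') :
    ∀ u : Fin n → U,
      ∑ u' ∈ Finset.univ.filter
          (fun u' => u' ≠ u ∧
            (α * α') / ((Fintype.card B : ℝ) * (Fintype.card B' : ℝ)) < pairCollP p p' u u'),
        pairCollP p p' u u' ≤ β + β' := by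
  intro u
  set S := Finset.univ.filter
      (fun u' : Fin n → U => u' ≠ u ∧
        (α * α') / ((Fintype.card B : ℝ) * (Fintype.card B' : ℝ)) < pairCollP p p' u u') with hS
  set S1 := Finset.univ.filter
      (fun u' : Fin n → U => u' ≠ u ∧ α / (Fintype.card B : ℝ) < collP p u u') with hS1
  set S2 := Finset.univ.filter
      (fun u' : Fin n → U => u' ≠ u ∧ α' / (Fintype.card B' : ℝ) < collP p' u u') with hS2
  have hsub : S ⊆ S1 ∪ S2 := by
    intro u' hu'
    simp only [hS, Finset.mem_filter, Finset.mem_univ, true_and] at hu'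
    obtain ⟨hne, hlt⟩ := hu'
    rcases lt_or_ge (α / (Fintype.card B : ℝ)) (collP p u u') with h1 | h1
    · exact Finset.mem_union_left _ (by simp [hS1, hne, h1])
    · rcases lt_or_ge (α' / (Fintype.card B' : ℝ)) (collP p' u u') with h2 | h2
      · exact Finset.mem_union_right _ (by simp [hS2, hne, h2])
      · exfalso
        have := mul_le_mul h1 h2 (collP_nonneg p' hp' u u')
          (div_nonneg hα (by positivity))
        rw [div_mul_div_comm] at this
        rw [pairCollP_eq] at hlt
        linarith
  have hnn : ∀ u' ∈ S1 ∪ S2, 0 ≤ pairCollP p p' u u' := by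
    intro u' _
    rw [pairCollP_eq]
    exact mul_nonneg (collP_nonneg p hp u u') (collP_nonneg p' hp' u u')
  calc ∑ u' ∈ S, pairCollP p p' u u'
      ≤ ∑ u' ∈ S1 ∪ S2, pairCollP p p' u u' := Finset.sum_le_sum_of_subset_of_nonneg hsub
        (fun u' h _ => hnn u' h)
    _ ≤ ∑ u' ∈ S1, pairCollP p p' u u' + ∑ u' ∈ S2, pairCollP p p' u u' := by
        rw [← Finset.sum_union_inter]
        have : 0 ≤ ∑ u' ∈ S1 ∩ S2, pairCollP p p' u u' :=
          Finset.sum_nonneg fun u' h => hnn u' (Finset.mem_union_left _ (Finset.mem_of_mem_inter_left h))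
        linarith
    _ ≤ ∑ u' ∈ S1, collP p u u' + ∑ u' ∈ S2, collP p' u u' := by
        apply add_le_add
        · apply Finset.sum_le_sum
          intro u' _
          rw [pairCollP_eq]
          calc collP p u u' * collP p' u u'
              ≤ collP p u u' * 1 := mul_le_mul_of_nonneg_left
                (collP_le_one p' hp' hp1' u u') (collP_nonneg p hp u u')
            _ = collP p u u' := mul_one _
        · apply Finset.sum_le_sum
          intro u' _
          rw [pairCollP_eq]
          calc collP p u u' * collP p' u u'
              ≤ 1 * collP p' u u' := mul_le_mul_of_nonneg_right
                (collP_le_one p hp hp1 u u') (collP_nonneg p' hp' u u')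
            _ = collP p' u u' := one_mul _
    _ ≤ β + β' := add_le_add (H3 u) (H3' u)
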